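/- Let c > 0 be a constant and let ρ, v, q : ℝ × ℝ → ℝ be 1-periodic in u, with ρ of class C² and v, q continuous (v of class C¹). Then ρ satisfies the advection–diffusion equation ∂_t ρ + ρ (∂_s α − κ β) = c ∂_s(∂_s ρ) − ∂_s(v ρ) + q at every (t,u) if and only if for every t and all 0 ≤ u₁ ≤ u₂ ≤ 1 the segment mass m(t) := ∫_{u₁}^{u₂} ρ(t,u) g(t,u) du satisfies the balance law d/dt m(t) = −[ −c (1/g) ∂_u ρ + v ρ ]_{u=u₁}^{u=u₂} + ∫_{u₁}^{u₂} q(t,u) g(t,u) du. -/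

import Mathlib

open Real MeasureTheory Function RealInnerProductSpace

local notation "E3" => EuclideanSpace ℝ (Fin 3)

/-!
The length element evolves by `∂ₜ g = ∂ᵤ α - g κ β`: by symmetry of mixed partials
`∂ₜ ∂ᵤ X = ∂ᵤ ∂ₜ X`, so `∂ₜ g = ⟪T, ∂ᵤ(β N + γ B + α T)⟫`, and differentiating `⟪T, ∂ₜ X⟫ = α`
with the Frenet relation `∂ᵤ T = g κ N` evaluates this. Multiplying the equation by `g` therefore
puts it in conservation form `∂ₜ(ρ g) = -∂ᵤ j + q g` with the flux `j = -c ∂ₛ ρ + v ρ`.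
Differentiating the segment mass under the integral sign and integrating `∂ᵤ j` gives the balance
law; conversely, two continuous `1`-periodic functions with equal integrals over every subsegment
of `[0, 1]` coincide.
-/

open Set Filter Metric

section PartialDerivatives

variable {E : Type*} [NormedAddCommGroup E] [NormedSpace ℝ E]

theorem DifferentiableAt.hasDerivAt_partial_fst {f : ℝ × ℝ → E} {t u : ℝ}
    (hf : DifferentiableAt ℝ f (t, u)) :
    HasDerivAt (fun s => f (s, u)) (fderiv ℝ f (t, u) (1, 0)) t :=
  hf.hasFDerivAt.comp_hasDerivAt t ((hasDerivAt_id' t).prodMk (hasDerivAt_const t u))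

theorem DifferentiableAt.hasDerivAt_partial_snd {f : ℝ × ℝ → E} {t u : ℝ}
    (hf : DifferentiableAt ℝ f (t, u)) :
    HasDerivAt (fun w => f (t, w)) (fderiv ℝ f (t, u) (0, 1)) u :=
  hf.hasFDerivAt.comp_hasDerivAt u ((hasDerivAt_const u t).prodMk (hasDerivAt_id' u))

theorem continuous_deriv_fst_of_contDiff {f : ℝ → ℝ → E} (hf : ContDiff ℝ 1 (uncurry f)) :
    Continuous (uncurry fun t u => deriv (f · u) t) := by
  have hfd := hf.differentiable one_ne_zero
  have hpartial : (uncurry fun t u => deriv (f · u) t) = fun p => fderiv ℝ (uncurry f) p (1, 0) :=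
    funext fun p => (hfd p).hasDerivAt_partial_fst.deriv
  rw [hpartial]
  exact (hf.continuous_fderiv one_ne_zero).clm_apply continuous_const

theorem hasDerivAt_intervalIntegral_of_contDiff [CompleteSpace E] {F : ℝ → ℝ → E}
    (hF : ContDiff ℝ 1 (uncurry F)) (a b t : ℝ) :
    HasDerivAt (fun s => ∫ u in a..b, F s u) (∫ u in a..b, deriv (F · u) t) t := by
  have hFc := hF.continuous
  have hG := continuous_deriv_fst_of_contDiff hF
  obtain ⟨M, hM⟩ := ((isCompact_closedBall t 1).prod (isCompact_uIcc (a := a) (b := b))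
    ).exists_bound_of_continuousOn hG.continuousOn
  refine (intervalIntegral.hasDerivAt_integral_of_dominated_loc_of_deriv_le (bound := fun _ => M)
    (ball_mem_nhds t one_pos)
    (Eventually.of_forall fun s => (hFc.uncurry_left s).aestronglyMeasurable)
    ((hFc.uncurry_left t).intervalIntegrable a b) (hG.uncurry_left t).aestronglyMeasurable
    (Eventually.of_forall fun u hu s hs =>
      hM (s, u) ⟨ball_subset_closedBall hs, uIoc_subset_uIcc hu⟩)
    intervalIntegrable_const
    (Eventually.of_forall fun u _ s _ => ?_)).2
  exact (hF.differentiable one_ne_zero (s, u)).hasDerivAt_partial_fst.differentiableAt.hasDerivAt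

theorem exists_hasDerivAt_mixed_partials {X Xt Xu : ℝ → ℝ → E} (hX : ContDiff ℝ 2 (uncurry X))
    (hXt : ∀ t u, HasDerivAt (X · u) (Xt t u) t) (hXu : ∀ t u, HasDerivAt (X t ·) (Xu t u) u)
    (t u : ℝ) : ∃ W, HasDerivAt (Xt t ·) W u ∧ HasDerivAt (Xu · u) W t := by
  set D := fderiv ℝ (uncurry X)
  have hXd : Differentiable ℝ (uncurry X) := hX.differentiable two_ne_zero
  have hDd : Differentiable ℝ D := (hX.fderiv_right le_rfl).differentiable one_ne_zero
  have hXt_eq : Xt = fun s w => D (s, w) (1, 0) :=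
    funext₂ fun s w => (hXt s w).unique (hXd (s, w)).hasDerivAt_partial_fst
  have hXu_eq : Xu = fun s w => D (s, w) (0, 1) :=
    funext₂ fun s w => (hXu s w).unique (hXd (s, w)).hasDerivAt_partial_snd
  refine ⟨fderiv ℝ D (t, u) (0, 1) (1, 0), ?_, ?_⟩
  · rw [hXt_eq]
    simpa using (hDd (t, u)).hasDerivAt_partial_snd.clm_apply
      (hasDerivAt_const u ((1 : ℝ), (0 : ℝ)))
  · rw [hXu_eq, hX.contDiffAt.isSymmSndFDerivAt (by simp) (0, 1) (1, 0)]
    simpa using (hDd (t, u)).hasDerivAt_partial_fst.clm_apply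
      (hasDerivAt_const t ((0 : ℝ), (1 : ℝ)))

theorem Function.Periodic.deriv {f : ℝ → E} {p : ℝ} (hf : Periodic f p) : Periodic (deriv f) p :=
  fun x => by rw [← deriv_comp_add_const, hf.funext]

end PartialDerivatives

theorem HasDerivAt.norm_of_ne_zero {F : Type*} [NormedAddCommGroup F] [InnerProductSpace ℝ F]
    {f : ℝ → F} {f' : F} {x : ℝ} (hf : HasDerivAt f f' x) (h0 : f x ≠ 0) :
    HasDerivAt (‖f ·‖) (⟪f x, f'⟫ / ‖f x‖) x := by
  obtain ⟨d, hd⟩ : ∃ d, HasDerivAt (‖f ·‖) d x :=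
    ⟨_, (hf.differentiableAt.norm ℝ h0).hasDerivAt⟩
  have hsq : 2 * ‖f x‖ * d = 2 * ⟪f x, f'⟫ := by
    simpa using (hd.pow 2).unique hf.norm_sq
  have hpos : 0 < ‖f x‖ := norm_pos_iff.mpr h0
  convert hd using 1
  field_simp
  linarith

theorem eqOn_Icc_of_forall_intervalIntegral_eq {f₁ f₂ : ℝ → ℝ} {a b : ℝ} (hab : a < b)
    (h₁ : Continuous f₁) (h₂ : Continuous f₂)
    (h : ∀ u₁ u₂, a ≤ u₁ → u₁ ≤ u₂ → u₂ ≤ b → ∫ u in u₁..u₂, f₁ u = ∫ u in u₁..u₂, f₂ u) :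
    EqOn f₁ f₂ (Icc a b) := by
  have hIoo : EqOn f₁ f₂ (Ioo a b) := fun x hx => by
    refine (h₁.integral_hasStrictDerivAt a x).hasDerivAt.unique
      ((h₂.integral_hasStrictDerivAt a x).hasDerivAt.congr_of_eventuallyEq ?_)
    filter_upwards [Ioo_mem_nhds hx.1 hx.2] with y hy
    exact h a y le_rfl hy.1.le hy.2.le
  simpa [closure_Ioo hab.ne] using hIoo.closure h₁ h₂

theorem Function.Periodic.forall_eq_iff_forall_intervalIntegral_eq {f₁ f₂ : ℝ → ℝ} {p : ℝ}
    (hp : 0 < p) (h₁ : Continuous f₁) (h₂ : Continuous f₂) (hp₁ : Periodic f₁ p)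
    (hp₂ : Periodic f₂ p) :
    (∀ u, f₁ u = f₂ u) ↔
      ∀ u₁ u₂, 0 ≤ u₁ → u₁ ≤ u₂ → u₂ ≤ p → ∫ u in u₁..u₂, f₁ u = ∫ u in u₁..u₂, f₂ u := by
  refine ⟨fun h u₁ u₂ _ _ _ => intervalIntegral.integral_congr fun u _ => h u, fun h x => ?_⟩
  obtain ⟨y, hy, hxy⟩ := (hp₁.sub hp₂).exists_mem_Ico₀ hp x
  rw [← sub_eq_zero, ← Pi.sub_apply, hxy, Pi.sub_apply,
    eqOn_Icc_of_forall_intervalIntegral_eq hp h₁ h₂ h (Ico_subset_Icc_self hy), sub_self]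

section CurveGeometry

variable {F : Type*} [NormedAddCommGroup F] [InnerProductSpace ℝ F]

theorem inner_deriv_velocity_of_frenet {T N B : ℝ → F} {α β γ : ℝ → ℝ} {u k α' : ℝ} {V' : F}
    (hTnorm : ∀ w, ‖T w‖ = 1) (hNnorm : ∀ w, ‖N w‖ = 1) (hTN : ∀ w, ⟪T w, N w⟫ = 0)
    (hTB : ∀ w, ⟪T w, B w⟫ = 0) (hNB : ∀ w, ⟪N w, B w⟫ = 0)
    (hT : HasDerivAt T (k • N u) u) (hα : HasDerivAt α α' u)
    (hV : HasDerivAt (fun w => β w • N w + γ w • B w + α w • T w) V' u) :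
    ⟪T u, V'⟫ = α' - k * β u := by
  have hTV : (fun w => ⟪T w, β w • N w + γ w • B w + α w • T w⟫) = α := funext fun w => by
    simp [inner_add_right, real_inner_smul_right, hTN, hTB, hTnorm]
  have hNV : ⟪N u, β u • N u + γ u • B u + α u • T u⟫ = β u := by
    simp [inner_add_right, real_inner_smul_right, real_inner_comm (T u), hTN, hNB, hNnorm]
  have hderiv := hT.inner ℝ hV
  rw [hTV] at hderiv
  have := hderiv.unique hα
  rw [real_inner_smul_left, hNV] at this
  linarith

variable {X Xu T N B : ℝ → ℝ → F} {g κ α αu β γ : ℝ → ℝ → ℝ}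

theorem contDiff_length_element (hX : ContDiff ℝ 2 (uncurry X))
    (hXu : ∀ t u, HasDerivAt (X t ·) (Xu t u) u) (hg : ∀ t u, g t u = ‖Xu t u‖)
    (hgpos : ∀ t u, 0 < g t u) : ContDiff ℝ 1 (uncurry g) := by
  have hXd : Differentiable ℝ (uncurry X) := hX.differentiable two_ne_zero
  have hXu_eq : uncurry Xu = fun p => fderiv ℝ (uncurry X) p (0, 1) :=
    funext fun p => (hXu p.1 p.2).unique (hXd p).hasDerivAt_partial_snd
  have hXuC : ContDiff ℝ 1 (uncurry Xu) := by
    rw [hXu_eq]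
    exact (hX.fderiv_right le_rfl).clm_apply contDiff_const
  have hg_eq : uncurry g = fun p => ‖uncurry Xu p‖ := funext fun p => hg p.1 p.2
  rw [hg_eq]
  exact hXuC.norm ℝ fun p => norm_pos_iff.mp (hg p.1 p.2 ▸ hgpos p.1 p.2)

theorem Function.Periodic.length_element {p : ℝ} (hXper : ∀ t, Periodic (X t) p)
    (hXu : ∀ t u, HasDerivAt (X t ·) (Xu t u) u) (hg : ∀ t u, g t u = ‖Xu t u‖) (t : ℝ) :
    Periodic (g t) p := fun u => by
  rw [hg, hg, ← (hXu t u).deriv, ← (hXu t (u + p)).deriv, (hXper t).deriv]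

theorem hasDerivAt_length_element (hX : ContDiff ℝ 2 (uncurry X))
    (hXu : ∀ t u, HasDerivAt (X t ·) (Xu t u) u) (hg : ∀ t u, g t u = ‖Xu t u‖)
    (hgpos : ∀ t u, 0 < g t u) (hT : ∀ t u, T t u = (g t u)⁻¹ • Xu t u)
    (hNnorm : ∀ t u, ‖N t u‖ = 1) (hTN : ∀ t u, ⟪T t u, N t u⟫ = 0)
    (hTB : ∀ t u, ⟪T t u, B t u⟫ = 0) (hNB : ∀ t u, ⟪N t u, B t u⟫ = 0)
    (hFrenet : ∀ t u, HasDerivAt (T t ·) ((g t u * κ t u) • N t u) u)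
    (hαu : ∀ t u, HasDerivAt (α t ·) (αu t u) u)
    (hevol : ∀ t u, HasDerivAt (X · u) (β t u • N t u + γ t u • B t u + α t u • T t u) t)
    (t u : ℝ) : HasDerivAt (g · u) (αu t u - g t u * κ t u * β t u) t := by
  obtain ⟨W, hWu, hWt⟩ := exists_hasDerivAt_mixed_partials hX hevol hXu t u
  have hTnorm : ∀ w, ‖T t w‖ = 1 := fun w => by
    rw [hT, norm_smul, norm_inv, ← hg, Real.norm_of_nonneg (hgpos t w).le,
      inv_mul_cancel₀ (hgpos t w).ne']
  have hXu0 : Xu t u ≠ 0 := norm_pos_iff.mp (hg t u ▸ hgpos t u)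
  have hgt : HasDerivAt (g · u) ⟪T t u, W⟫ t := by
    rw [show (g · u) = fun s => ‖Xu s u‖ from funext fun s => hg s u, hT, real_inner_smul_left,
      hg, inv_mul_eq_div]
    exact hWt.norm_of_ne_zero hXu0
  rwa [inner_deriv_velocity_of_frenet hTnorm (hNnorm t) (hTN t) (hTB t) (hNB t) (hFrenet t u)
    (hαu t u) hWu] at hgt

end CurveGeometry

theorem conservation_law_iff_balance_law {F φ S : ℝ → ℝ → ℝ} {p : ℝ} (hp : 0 < p)
    (hF : ContDiff ℝ 1 (uncurry F)) (hφ : ∀ t, ContDiff ℝ 1 (φ t))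
    (hS : ∀ t, Continuous (S t)) (hFper : ∀ t, Periodic (F t) p)
    (hφper : ∀ t, Periodic (φ t) p) (hSper : ∀ t, Periodic (S t) p) :
    (∀ t u, deriv (F · u) t = -deriv (φ t) u + S t u) ↔
      ∀ t u₁ u₂, 0 ≤ u₁ → u₁ ≤ u₂ → u₂ ≤ p →
        HasDerivAt (fun s => ∫ u in u₁..u₂, F s u)
          (-(φ t u₂ - φ t u₁) + ∫ u in u₁..u₂, S t u) t := by
  refine forall_congr' fun t => ?_
  have hφ' : Continuous (deriv (φ t)) := (hφ t).continuous_deriv le_rfl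
  have hflux : ∀ u₁ u₂, ∫ u in u₁..u₂, (-deriv (φ t) u + S t u)
      = -(φ t u₂ - φ t u₁) + ∫ u in u₁..u₂, S t u := fun u₁ u₂ => by
    rw [intervalIntegral.integral_add (f := fun u => -deriv (φ t) u)
      (hφ'.neg.intervalIntegrable _ _) ((hS t).intervalIntegrable _ _),
      intervalIntegral.integral_neg,
      intervalIntegral.integral_deriv_of_contDiffOn_uIcc (hφ t).contDiffOn]
  have hbalance : ∀ u₁ u₂, HasDerivAt (fun s => ∫ u in u₁..u₂, F s u)
      (-(φ t u₂ - φ t u₁) + ∫ u in u₁..u₂, S t u) t ↔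
      ∫ u in u₁..u₂, deriv (F · u) t = ∫ u in u₁..u₂, (-deriv (φ t) u + S t u) := fun u₁ u₂ => by
    have hmass := hasDerivAt_intervalIntegral_of_contDiff hF u₁ u₂ t
    rw [hflux]
    exact ⟨hmass.unique, fun h => h ▸ hmass⟩
  simp only [hbalance]
  exact Periodic.forall_eq_iff_forall_intervalIntegral_eq hp
    ((continuous_deriv_fst_of_contDiff hF).uncurry_left t) (hφ'.neg.add (hS t))
    (fun u => congrArg (deriv · t) (funext fun s => hFper s u)) fun u => by
      simp only [(hφper t).deriv u, hSper t u]

noncomputable def diffusionAdvectionFlux (c : ℝ) (g ρ v : ℝ → ℝ) (u : ℝ) : ℝ :=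
  -c * ((g u)⁻¹ * deriv ρ u) + v u * ρ u

section Flux

variable {g ρ v : ℝ → ℝ} (c : ℝ)

theorem hasDerivAt_diffusionAdvectionFlux (hg : ContDiff ℝ 1 g) (hg0 : ∀ u, g u ≠ 0)
    (hρ : ContDiff ℝ 2 ρ) (hv : ContDiff ℝ 1 v) (u : ℝ) :
    HasDerivAt (diffusionAdvectionFlux c g ρ v)
      (-c * deriv (fun w => (g w)⁻¹ * deriv ρ w) u + deriv (fun w => v w * ρ w) u) u := by
  have hρ' : ContDiff ℝ 1 (deriv ρ) := ContDiff.deriv' (n := 1) hρ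
  have hdiff : Differentiable ℝ fun w => (g w)⁻¹ * deriv ρ w :=
    ((hg.inv hg0).mul hρ').differentiable one_ne_zero
  have hadv : Differentiable ℝ fun w => v w * ρ w :=
    (hv.mul (hρ.of_le one_le_two)).differentiable one_ne_zero
  exact ((hdiff u).hasDerivAt.const_mul (-c)).add (hadv u).hasDerivAt

theorem contDiff_diffusionAdvectionFlux (hg : ContDiff ℝ 1 g) (hg0 : ∀ u, g u ≠ 0)
    (hρ : ContDiff ℝ 2 ρ) (hv : ContDiff ℝ 1 v) :
    ContDiff ℝ 1 (diffusionAdvectionFlux c g ρ v) :=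
  ((contDiff_const.mul ((hg.inv hg0).mul (ContDiff.deriv' (n := 1) hρ))).add
    (hv.mul (hρ.of_le one_le_two)))

theorem Function.Periodic.diffusionAdvectionFlux {p : ℝ} (hg : Periodic g p) (hρ : Periodic ρ p)
    (hv : Periodic v p) : Periodic (diffusionAdvectionFlux c g ρ v) p := fun u => by
  simp only [_root_.diffusionAdvectionFlux, hg u, hρ u, hv u, hρ.deriv u]

end Flux

theorem advection_diffusion_iff_conservation_form (c : ℝ) {ρ g v : ℝ → ℝ → ℝ} {t u αu κ β q : ℝ}
    (hρ : DifferentiableAt ℝ (ρ · u) t) (hgt : HasDerivAt (g · u) (αu - g t u * κ * β) t)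
    (hg0 : ∀ w, g t w ≠ 0) (hgC : ContDiff ℝ 1 (g t)) (hρC : ContDiff ℝ 2 (ρ t))
    (hvC : ContDiff ℝ 1 (v t)) :
    (deriv (fun s => ρ s u) t + ρ t u * ((g t u)⁻¹ * αu - κ * β)
        = c * ((g t u)⁻¹ * deriv (fun w => (g t w)⁻¹ * deriv (fun z => ρ t z) w) u)
          - (g t u)⁻¹ * deriv (fun w => v t w * ρ t w) u + q) ↔
      deriv (fun s => ρ s u * g s u) t
        = -deriv (diffusionAdvectionFlux c (g t) (ρ t) (v t)) u + q * g t u := by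
  have hgu := hg0 u
  rw [(hρ.hasDerivAt.fun_mul hgt).deriv,
    (hasDerivAt_diffusionAdvectionFlux c hgC hg0 hρC hvC u).deriv, ← mul_left_inj' hgu]
  exact Eq.congr (by field_simp) (by field_simp; ring)

theorem advection_diffusion_iff_balance_law_general
    (X Xu : ℝ → ℝ → E3)
    (g κ α αu β γ : ℝ → ℝ → ℝ)
    (T N B : ℝ → ℝ → E3)
    (hX2 : ContDiff ℝ 2 (uncurry X))
    (hXper : ∀ t u, X t (u + 1) = X t u)
    (hXu : ∀ t u, HasDerivAt (fun w => X t w) (Xu t u) u)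
    (hg : ∀ t u, g t u = ‖Xu t u‖)
    (hgpos : ∀ t u, 0 < g t u)
    (hT : ∀ t u, T t u = (g t u)⁻¹ • Xu t u)
    (hNnorm : ∀ t u, ‖N t u‖ = 1)
    (hTN : ∀ t u, ⟪T t u, N t u⟫ = 0)
    (hTB : ∀ t u, ⟪T t u, B t u⟫ = 0)
    (hNB : ∀ t u, ⟪N t u, B t u⟫ = 0)
    (hFrenet : ∀ t u, HasDerivAt (fun w => T t w) ((g t u * κ t u) • N t u) u)
    (hαu : ∀ t u, HasDerivAt (fun w => α t w) (αu t u) u)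
    (hevol : ∀ t u, HasDerivAt (fun s => X s u)
      (β t u • N t u + γ t u • B t u + α t u • T t u) t)
    (c : ℝ)
    (ρ v q : ℝ → ℝ → ℝ)
    (hρ2 : ContDiff ℝ 2 (uncurry ρ))
    (hv1 : ContDiff ℝ 1 (uncurry v))
    (hqc : Continuous (uncurry q))
    (hρper : ∀ t u, ρ t (u + 1) = ρ t u)
    (hvper : ∀ t u, v t (u + 1) = v t u)
    (hqper : ∀ t u, q t (u + 1) = q t u) :
    (∀ t u : ℝ,
      deriv (fun s => ρ s u) t + ρ t u * ((g t u)⁻¹ * αu t u - κ t u * β t u)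
        = c * ((g t u)⁻¹ * deriv (fun w => (g t w)⁻¹ * deriv (fun z => ρ t z) w) u)
          - (g t u)⁻¹ * deriv (fun w => v t w * ρ t w) u + q t u)
    ↔
    (∀ t u₁ u₂ : ℝ, 0 ≤ u₁ → u₁ ≤ u₂ → u₂ ≤ 1 →
      HasDerivAt (fun s => ∫ u in u₁..u₂, ρ s u * g s u)
        (-((-c * ((g t u₂)⁻¹ * deriv (fun z => ρ t z) u₂) + v t u₂ * ρ t u₂)
            - (-c * ((g t u₁)⁻¹ * deriv (fun z => ρ t z) u₁) + v t u₁ * ρ t u₁))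
          + ∫ u in u₁..u₂, q t u * g t u) t) := by
  have hgC := contDiff_length_element hX2 hXu hg hgpos
  have hgt := hasDerivAt_length_element hX2 hXu hg hgpos hT hNnorm hTN hTB hNB hFrenet hαu hevol
  have hgper := Periodic.length_element hXper hXu hg
  have hg0 : ∀ t u, g t u ≠ 0 := fun t u => (hgpos t u).ne'
  have hρ1 : ContDiff ℝ 1 (uncurry ρ) := hρ2.of_le one_le_two
  have hgtC : ∀ t, ContDiff ℝ 1 (g t) := fun t => hgC.comp (contDiff_prodMk_right t)
  have hρtC : ∀ t, ContDiff ℝ 2 (ρ t) := fun t => hρ2.comp (contDiff_prodMk_right t)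
  have hvtC : ∀ t, ContDiff ℝ 1 (v t) := fun t => hv1.comp (contDiff_prodMk_right t)
  have hconservation := fun t u =>
    advection_diffusion_iff_conservation_form c (ρ := ρ) (q := q t u)
      ((hρ1.differentiable one_ne_zero (t, u)).hasDerivAt_partial_fst.differentiableAt)
      (hgt t u) (hg0 t) (hgtC t) (hρtC t) (hvtC t)
  simp only [hconservation]
  exact conservation_law_iff_balance_law (F := fun t u => ρ t u * g t u)
    (φ := fun t => diffusionAdvectionFlux c (g t) (ρ t) (v t)) (S := fun t u => q t u * g t u)
    one_pos (hρ1.mul hgC)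
    (fun t => contDiff_diffusionAdvectionFlux c (hgtC t) (hg0 t) (hρtC t) (hvtC t))
    (fun t => (hqc.uncurry_left t).mul (hgC.continuous.uncurry_left t))
    (fun t => Periodic.mul (hρper t) (hgper t))
    (fun t => (hgper t).diffusionAdvectionFlux c (hρper t) (hvper t))
    (fun t => Periodic.mul (hqper t) (hgper t))

/-- Context: an evolving family of closed space curves `Γ_t` parameterized by `X t u`,
with local length `g = ‖∂_u X‖ > 0`, unit tangent `T = g⁻¹ • ∂_u X`, Frenet-type frame
`(T, N, B)`, curvature `κ` (with `∂_u T = g κ N`), evolving by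
`∂_t X = β N + γ B + α T`, and total length `L t = ∫₀¹ g t u du`. -/
theorem advection_diffusion_iff_balance_law
    (X Xu : ℝ → ℝ → E3)
    (g κ α αu β γ : ℝ → ℝ → ℝ)
    (T N B : ℝ → ℝ → E3)
    (L : ℝ → ℝ)
    (hX2 : ContDiff ℝ 2 (uncurry X))
    (hXper : ∀ t u, X t (u + 1) = X t u)
    (hXu : ∀ t u, HasDerivAt (fun w => X t w) (Xu t u) u)
    (hg : ∀ t u, g t u = ‖Xu t u‖)
    (hgpos : ∀ t u, 0 < g t u)
    (hT : ∀ t u, T t u = (g t u)⁻¹ • Xu t u)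
    (hN1 : ContDiff ℝ 1 (uncurry N))
    (hB1 : ContDiff ℝ 1 (uncurry B))
    (hNper : ∀ t u, N t (u + 1) = N t u)
    (hBper : ∀ t u, B t (u + 1) = B t u)
    (hNnorm : ∀ t u, ‖N t u‖ = 1)
    (hBnorm : ∀ t u, ‖B t u‖ = 1)
    (hTN : ∀ t u, ⟪T t u, N t u⟫ = 0)
    (hTB : ∀ t u, ⟪T t u, B t u⟫ = 0)
    (hNB : ∀ t u, ⟪N t u, B t u⟫ = 0)
    (hκc : Continuous (uncurry κ))
    (hFrenet : ∀ t u, HasDerivAt (fun w => T t w) ((g t u * κ t u) • N t u) u)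
    (hα1 : ContDiff ℝ 1 (uncurry α))
    (hβ1 : ContDiff ℝ 1 (uncurry β))
    (hγ1 : ContDiff ℝ 1 (uncurry γ))
    (hαper : ∀ t u, α t (u + 1) = α t u)
    (hβper : ∀ t u, β t (u + 1) = β t u)
    (hγper : ∀ t u, γ t (u + 1) = γ t u)
    (hαu : ∀ t u, HasDerivAt (fun w => α t w) (αu t u) u)
    (hevol : ∀ t u, HasDerivAt (fun s => X s u)
      (β t u • N t u + γ t u • B t u + α t u • T t u) t)
    (hL : ∀ t, L t = ∫ u in (0:ℝ)..1, g t u)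

    (c : ℝ) (hc : 0 < c)
    (ρ v q : ℝ → ℝ → ℝ)
    (hρ2 : ContDiff ℝ 2 (uncurry ρ))
    (hv1 : ContDiff ℝ 1 (uncurry v))
    (hqc : Continuous (uncurry q))
    (hρper : ∀ t u, ρ t (u + 1) = ρ t u)
    (hvper : ∀ t u, v t (u + 1) = v t u)
    (hqper : ∀ t u, q t (u + 1) = q t u) :
    (∀ t u : ℝ,
      deriv (fun s => ρ s u) t + ρ t u * ((g t u)⁻¹ * αu t u - κ t u * β t u)
        = c * ((g t u)⁻¹ * deriv (fun w => (g t w)⁻¹ * deriv (fun z => ρ t z) w) u)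
          - (g t u)⁻¹ * deriv (fun w => v t w * ρ t w) u + q t u)
    ↔
    (∀ t u₁ u₂ : ℝ, 0 ≤ u₁ → u₁ ≤ u₂ → u₂ ≤ 1 →
      HasDerivAt (fun s => ∫ u in u₁..u₂, ρ s u * g s u)
        (-((-c * ((g t u₂)⁻¹ * deriv (fun z => ρ t z) u₂) + v t u₂ * ρ t u₂)
            - (-c * ((g t u₁)⁻¹ * deriv (fun z => ρ t z) u₁) + v t u₁ * ρ t u₁))
          + ∫ u in u₁..u₂, q t u * g t u) t) :=
  advection_diffusion_iff_balance_law_general X Xu g κ α αu β γ T N B hX2 hXper hXu hg hgpos hT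
    hNnorm hTN hTB hNB hFrenet hαu hevol c ρ v q hρ2 hv1 hqc hρper hvper hqper
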